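/- arXiv:1905.09729 — 3 statements merged into one kernel-verified Lean document; each statement's English description precedes it below -/
import Mathlib

section
/- Let k ≥ 2 be an integer. Every directed graph on n vertices with minimum out-degree at least n·log(2k)/(k-1) contains at least n^ℓ/(2k^{ℓ+1}) directed cycles of length ℓ, for some fixed ℓ with 2 ≤ ℓ ≤ k. -/
/-!
Count `k`-tuples of vertices. Call a tuple sink-free if every entry has an out-neighbour among
the entries. For a fixed position `j` and entry `v` there are at most `(n - d⁺(v))^(k-1)` ways to
make `v` a sink, and `1 - x ≤ e^(-x)` together with the degree bound makes this at most
`n^(k-1)/(2k)`; so at least `n^k/2` tuples are sink-free. Following out-neighbours inside a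
sink-free tuple closes a directed cycle of some length `2 ≤ ℓ ≤ k`, which can be rotated to start
at its least vertex, and a fixed such cycle lies in at most `k^ℓ n^(k-ℓ)` tuples. Hence
`n^k/2 ≤ ∑_{ℓ=2}^k C_ℓ k^ℓ n^(k-ℓ)`, where `C_ℓ` counts cycles up to rotation, and since there
are fewer than `k` lengths some `ℓ` has `C_ℓ ≥ n^ℓ/(2k^(ℓ+1))`.
-/

/-- The cyclic successor on `Fin ℓ`. -/
def cyc {ℓ : ℕ} (i : Fin ℓ) : Fin ℓ := ⟨(i.val + 1) % ℓ, Nat.mod_lt _ i.pos⟩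

open Finset Function
open scoped Classical

lemma cyc_eq_add_one {ℓ : ℕ} [NeZero ℓ] (i : Fin ℓ) : cyc i = i + 1 := by
  ext
  simp [cyc, Fin.val_add]

lemma Function.iterate_cyc {α : Type*} {f : α → α} {x : α} (i : Fin (minimalPeriod f x)) :
    f^[cyc i] x = f (f^[i] x) := by
  rw [← iterate_succ_apply' f, cyc, iterate_mod_minimalPeriod_eq]

lemma Function.exists_mem_periodicPts {α : Type*} [Finite α] [Nonempty α] (f : α → α) :
    ∃ x, x ∈ periodicPts f := by
  obtain ⟨x⟩ := ‹Nonempty α›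
  obtain ⟨m, n, hmn, h⟩ := Finite.exists_ne_map_eq_of_infinite (f^[·] x)
  wlog hlt : m < n generalizing m n
  · exact this n m hmn.symm h.symm (by omega)
  refine ⟨f^[m] x, mk_mem_periodicPts (n := n - m) (by omega) ?_⟩
  rw [IsPeriodicPt, IsFixedPt, ← iterate_add_apply, Nat.sub_add_cancel hlt.le]
  exact h.symm

variable {V : Type*}

def IsDirCycle {ℓ : ℕ} (D : V → V → Prop) (g : Fin ℓ → V) : Prop :=
  Injective g ∧ ∀ i, D (g i) (g (cyc i))

lemma IsDirCycle.map {W : Type*} {ℓ : ℕ} {D : V → V → Prop} {E : W → W → Prop} {g : Fin ℓ → V}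
    (hg : IsDirCycle D g) {φ : V → W} (hφ : Injective φ) (hD : ∀ a b, D a b → E (φ a) (φ b)) :
    IsDirCycle E (φ ∘ g) :=
  ⟨hφ.comp hg.1, fun i => hD _ _ (hg.2 i)⟩

lemma IsDirCycle.comp_add_right {ℓ : ℕ} [NeZero ℓ] {D : V → V → Prop} {g : Fin ℓ → V}
    (hg : IsDirCycle D g) (s : Fin ℓ) : IsDirCycle D (fun i => g (i + s)) :=
  ⟨hg.1.comp (add_left_injective s), fun i => by
    simpa only [cyc_eq_add_one, add_right_comm] using hg.2 (i + s)⟩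

lemma isDirCycle_iterate {D : V → V → Prop} {f : V → V} (hf : ∀ v, D v (f v)) (x : V) :
    IsDirCycle D (fun i : Fin (minimalPeriod f x) => f^[i] x) :=
  ⟨fun i j h => Fin.ext (iterate_injOn_Iio_minimalPeriod i.2 j.2 h),
    fun i => by simpa only [iterate_cyc] using hf _⟩

lemma exists_isDirCycle_of_forall_exists_rel {D : V → V → Prop} (hirr : ∀ v, ¬ D v v)
    {S : Finset V} (hS : S.Nonempty) (h : ∀ v ∈ S, ∃ u ∈ S, D v u) :
    ∃ ℓ, 2 ≤ ℓ ∧ ℓ ≤ #S ∧ ∃ g : Fin ℓ → V, IsDirCycle D g ∧ ∀ i, g i ∈ S := by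
  have : Nonempty S := hS.to_subtype
  choose f hfS hf using h
  set F : S → S := fun v => ⟨f v v.2, hfS v v.2⟩
  obtain ⟨x, hx⟩ := exists_mem_periodicPts F
  have hcyc := (isDirCycle_iterate (D := fun a b : S => D a b) (f := F) (fun v => hf v v.2) x).map
    Subtype.val_injective fun _ _ => id
  refine ⟨minimalPeriod F x, ?_, minimalPeriod_le_card.trans_eq (Fintype.card_coe S), _, hcyc,
    fun i => (F^[i] x).2⟩
  have hpos := minimalPeriod_pos_of_mem_periodicPts hx
  have hne : minimalPeriod F x ≠ 1 := fun h1 => by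
    have hfix : F x = x := minimalPeriod_eq_one_iff_isFixedPt.mp h1
    have hD := hf x x.2
    rw [show f x x.2 = x from congrArg Subtype.val hfix] at hD
    exact hirr x hD
  omega

-- phrased through `(i : ℕ) = 0` so that it needs no `[NeZero ℓ]`
def IsMinRooted [LinearOrder V] {ℓ : ℕ} (g : Fin ℓ → V) : Prop :=
  ∀ i j : Fin ℓ, (i : ℕ) = 0 → g i ≤ g j

lemma exists_isMinRooted_rotation [LinearOrder V] {ℓ : ℕ} [NeZero ℓ] (g : Fin ℓ → V) :
    ∃ s, IsMinRooted (fun i => g (i + s)) := by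
  obtain ⟨s, -, hs⟩ := exists_min_image univ g univ_nonempty
  refine ⟨s, fun i j hi => ?_⟩
  rw [show i = 0 from Fin.ext hi]
  simpa using hs _ (mem_univ _)

lemma mul_card_filter_isMinRooted_le [Fintype V] [LinearOrder V] {ℓ : ℕ} [NeZero ℓ]
    (P : (Fin ℓ → V) → Prop) (hinj : ∀ g, P g → Injective g)
    (hrot : ∀ g s, P g → P (fun i => g (i + s))) :
    ℓ * #{g | P g ∧ IsMinRooted g} ≤ #{g | P g} := by
  have key := card_le_card_of_injOn
    (s := (univ : Finset (Fin ℓ)) ×ˢ ({g | P g ∧ IsMinRooted g} : Finset (Fin ℓ → V)))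
    (t := {g | P g}) (fun x : Fin ℓ × (Fin ℓ → V) => fun i => x.2 (i + x.1)) ?_ ?_
  · simpa using key
  · rintro ⟨s, g⟩ hg
    simp only [mem_coe, mem_product, mem_filter, mem_univ, true_and] at hg ⊢
    exact hrot g s hg.1
  rintro ⟨s, g⟩ hg ⟨s', g'⟩ hg' h
  simp only [mem_coe, mem_product, mem_filter, mem_univ, true_and] at hg hg'
  have hfun : ∀ i, g (i + s) = g' (i + s') := congrFun h
  -- both words start at the same (minimal) vertex, so the shifts agree
  have h₁ : g 0 = g' (s' - s) := by simpa [neg_add_eq_sub] using hfun (-s)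
  have h₂ : g' 0 = g (s - s') := by simpa [neg_add_eq_sub] using (hfun (-s')).symm
  have h₀ : g 0 = g' 0 := le_antisymm (h₂ ▸ hg.2 0 _ rfl) (h₁ ▸ hg'.2 0 _ rfl)
  have hs : s = s' := (sub_eq_zero.mp (hinj g' hg'.1 (h₁.symm.trans h₀))).symm
  subst hs
  simp only [Prod.mk.injEq, true_and]
  funext i
  simpa using hfun (i - s)

section Counting
variable [Fintype V] {ι κ : Type*} [Fintype ι] [Fintype κ] [DecidableEq κ]

lemma card_filter_forall_apply_embedding_eq_le (p : ι ↪ κ) (g : ι → V) :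
    #{t : κ → V | ∀ r, t (p r) = g r} ≤ Fintype.card V ^ (Fintype.card κ - Fintype.card ι) := by
  calc #{t : κ → V | ∀ r, t (p r) = g r}
      ≤ #(univ : Finset (((Set.range p)ᶜ : Set κ) → V)) := by
        refine card_le_card_of_injOn (fun t i => t i) (fun _ _ => mem_coe.2 (mem_univ _)) ?_
        intro t ht t' ht' h
        simp only [coe_filter, mem_univ, true_and, Set.mem_ofPred_eq] at ht ht'
        funext i
        by_cases hi : i ∈ Set.range p
        · obtain ⟨r, rfl⟩ := hi
          rw [ht r, ht' r]
        · exact congrFun h ⟨i, hi⟩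
    _ = Fintype.card V ^ (Fintype.card κ - Fintype.card ι) := by
        rw [card_univ, Fintype.card_fun, Fintype.card_compl_set,
          Set.card_range_of_injective p.injective]

def ContainsPattern (C : Finset (ι → V)) (t : κ → V) : Prop :=
  ∃ g ∈ C, ∃ p : ι ↪ κ, ∀ r, t (p r) = g r

lemma card_filter_containsPattern_le (C : Finset (ι → V)) :
    #{t : κ → V | ContainsPattern C t} ≤
      #C * ((Fintype.card κ).descFactorial (Fintype.card ι) *
        Fintype.card V ^ (Fintype.card κ - Fintype.card ι)) := by
  calc #{t : κ → V | ContainsPattern C t}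
      ≤ #(C.biUnion fun g => univ.biUnion fun p : ι ↪ κ => {t : κ → V | ∀ r, t (p r) = g r}) :=
        card_le_card fun t ht => by
          obtain ⟨g, hg, p, hp⟩ := (mem_filter.1 ht).2
          exact mem_biUnion.2 ⟨g, hg, mem_biUnion.2 ⟨p, mem_univ _, mem_filter.2 ⟨mem_univ _, hp⟩⟩⟩
    _ ≤ ∑ g ∈ C, ∑ p : ι ↪ κ, #{t : κ → V | ∀ r, t (p r) = g r} :=
        card_biUnion_le.trans (sum_le_sum fun _ _ => card_biUnion_le)
    _ ≤ ∑ g ∈ C, ∑ p : ι ↪ κ, Fintype.card V ^ (Fintype.card κ - Fintype.card ι) :=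
        sum_le_sum fun g _ => sum_le_sum fun p _ => card_filter_forall_apply_embedding_eq_le p g
    _ = _ := by simp [Fintype.card_embedding_eq]

lemma card_filter_forall_not_rel_le (D : V → V → Prop) {k : ℕ} (j : Fin k) :
    #{t : Fin k → V | ∀ i, ¬ D (t j) (t i)} ≤ ∑ v, #{u | ¬ D v u} ^ (k - 1) := by
  calc #{t : Fin k → V | ∀ i, ¬ D (t j) (t i)}
      ≤ #((univ : Finset V).sigma fun v =>
          Fintype.piFinset fun _ : {i // i ≠ j} => ({u | ¬ D v u} : Finset V)) := by
        refine card_le_card_of_injOn (fun t => ⟨t j, fun i => t i⟩) ?_ ?_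
        · intro t ht
          simp only [coe_filter, Set.mem_ofPred_eq] at ht
          simp [ht]
        · intro t _ t' _ h
          simp only [Sigma.mk.injEq] at h
          funext i
          by_cases hi : i = j
          · subst hi; exact h.1
          · exact congrFun (eq_of_heq h.2) ⟨i, hi⟩
    _ = ∑ v, #{u | ¬ D v u} ^ (k - 1) := by
        simp [Fintype.card_subtype_compl]

end Counting

lemma pow_le_div_of_log_le {x y c : ℝ} {m : ℕ} (hx : 0 ≤ x) (hy : 0 < y) (hc : 0 < c)
    (h : Real.log c ≤ m * (y - x) / y) : x ^ m ≤ y ^ m / c := by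
  have hexp : x ≤ y * Real.exp (-((y - x) / y)) := by
    have := Real.add_one_le_exp (-((y - x) / y))
    calc x = y * (-((y - x) / y) + 1) := by field_simp; ring
      _ ≤ y * Real.exp (-((y - x) / y)) := by gcongr
  calc x ^ m ≤ (y * Real.exp (-((y - x) / y))) ^ m := by gcongr
    _ = y ^ m * Real.exp (-(m * (y - x) / y)) := by
        rw [mul_pow, ← Real.exp_nat_mul]; ring_nf
    _ ≤ y ^ m * Real.exp (-Real.log c) := by gcongr
    _ = y ^ m / c := by rw [Real.exp_neg, Real.exp_log hc, div_eq_mul_inv]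

def IsSinkFree {k : ℕ} (D : V → V → Prop) (t : Fin k → V) : Prop :=
  ∀ j, ∃ i, D (t j) (t i)

lemma card_filter_not_isSinkFree_le [Fintype V] (D : V → V → Prop) (k : ℕ) :
    #{t : Fin k → V | ¬ IsSinkFree D t} ≤ k * ∑ v, #{u | ¬ D v u} ^ (k - 1) := by
  calc #{t : Fin k → V | ¬ IsSinkFree D t}
      ≤ #(univ.biUnion fun j : Fin k => {t : Fin k → V | ∀ i, ¬ D (t j) (t i)}) :=
        card_le_card fun t ht => by simpa [IsSinkFree] using ht
    _ ≤ ∑ j : Fin k, #{t : Fin k → V | ∀ i, ¬ D (t j) (t i)} := card_biUnion_le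
    _ ≤ ∑ _j : Fin k, ∑ v, #{u | ¬ D v u} ^ (k - 1) :=
        sum_le_sum fun j _ => card_filter_forall_not_rel_le D j
    _ = k * ∑ v, #{u | ¬ D v u} ^ (k - 1) := by simp

lemma card_filter_isSinkFree_ge [Fintype V] {D : V → V → Prop} {k : ℕ} (hk : 2 ≤ k)
    (hdeg : ∀ v, (Fintype.card V : ℝ) * Real.log (2 * k) / ((k : ℝ) - 1) ≤ #{u | D v u}) :
    (Fintype.card V : ℝ) ^ k / 2 ≤ #{t : Fin k → V | IsSinkFree D t} := by
  set N := Fintype.card V with hN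
  have hk' : (2 : ℝ) ≤ k := by exact_mod_cast hk
  have hnonnbr : ∀ v, (#{u | ¬ D v u} : ℝ) ^ (k - 1) ≤ (N : ℝ) ^ (k - 1) / (2 * k) := by
    intro v
    have hNpos : (0 : ℝ) < N := by exact_mod_cast Fintype.card_pos_iff.2 ⟨v⟩
    have hsplit : (#{u | D v u} : ℝ) + #{u | ¬ D v u} = N := by
      exact_mod_cast card_filter_add_card_filter_not (s := univ) (D v)
    refine pow_le_div_of_log_le (Nat.cast_nonneg _) hNpos (by positivity) ?_
    have := hdeg v
    rw [div_le_iff₀ (by linarith)] at this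
    rw [le_div_iff₀ hNpos, Nat.cast_sub (by omega)]
    push_cast
    nlinarith
  have hbad : (#{t : Fin k → V | ¬ IsSinkFree D t} : ℝ) ≤ (N : ℝ) ^ k / 2 := by
    calc (#{t : Fin k → V | ¬ IsSinkFree D t} : ℝ)
        ≤ k * ∑ v, (#{u | ¬ D v u} : ℝ) ^ (k - 1) := by
          exact_mod_cast card_filter_not_isSinkFree_le D k
      _ ≤ k * ∑ _v : V, (N : ℝ) ^ (k - 1) / (2 * k) := by gcongr with v; exact hnonnbr v
      _ = (N : ℝ) ^ k / 2 := by
          rw [sum_const, card_univ, ← hN, nsmul_eq_mul, mul_div_assoc', ← pow_succ',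
            Nat.sub_add_cancel (by omega)]
          field_simp
  have htotal : (#{t : Fin k → V | IsSinkFree D t} : ℝ) + #{t : Fin k → V | ¬ IsSinkFree D t} =
      (N : ℝ) ^ k := by
    exact_mod_cast
      (card_filter_add_card_filter_not (s := univ) (IsSinkFree D)).trans (by simp [hN])
  linarith

lemma isSinkFree_subset_biUnion [Fintype V] [LinearOrder V] {D : V → V → Prop}
    (hirr : ∀ v, ¬ D v v) {k : ℕ} (hk : 0 < k) :
    ({t | IsSinkFree D t} : Finset (Fin k → V)) ⊆ (Icc 2 k).biUnion fun ℓ =>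
      {t | ContainsPattern ({g | IsDirCycle D g ∧ IsMinRooted g} : Finset (Fin ℓ → V)) t} := by
  intro t ht
  simp only [mem_filter, mem_univ, true_and] at ht
  obtain ⟨ℓ, hℓ, hℓS, g, hg, hgS⟩ := exists_isDirCycle_of_forall_exists_rel hirr
    (S := univ.image t) (image_nonempty.2 (univ_nonempty_iff.2 ⟨⟨0, hk⟩⟩)) (by
      simp only [mem_image, mem_univ, true_and, forall_exists_index, forall_apply_eq_imp_iff,
        exists_exists_eq_and]
      exact ht)
  have : NeZero ℓ := ⟨by omega⟩
  obtain ⟨s, hs⟩ := exists_isMinRooted_rotation g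
  have hocc : ∀ r, ∃ j, t j = g (r + s) := fun r => by simpa using hgS (r + s)
  choose p hp using hocc
  have hp_inj : Injective p := fun r r' h =>
    add_left_injective s (hg.1 (by rw [← hp, ← hp, h]))
  simp only [mem_biUnion, mem_Icc, mem_filter, mem_univ, true_and, ContainsPattern]
  exact ⟨ℓ, ⟨hℓ, hℓS.trans (card_image_le.trans_eq (card_fin k))⟩, _, ⟨hg.comp_add_right s, hs⟩,
    ⟨p, hp_inj⟩, hp⟩

lemma exists_card_filter_isDirCycle_isMinRooted_ge [Fintype V] [LinearOrder V]
    {D : V → V → Prop} (hirr : ∀ v, ¬ D v v) {k : ℕ} (hk : 2 ≤ k)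
    (hdeg : ∀ v, (Fintype.card V : ℝ) * Real.log (2 * k) / ((k : ℝ) - 1) ≤ #{u | D v u}) :
    ∃ ℓ ∈ Icc 2 k, (Fintype.card V : ℝ) ^ ℓ / (2 * (k : ℝ) ^ (ℓ + 1)) ≤
      #{g : Fin ℓ → V | IsDirCycle D g ∧ IsMinRooted g} := by
  set N := Fintype.card V
  set C : ℕ → ℕ := fun ℓ => #{g : Fin ℓ → V | IsDirCycle D g ∧ IsMinRooted g}
  rcases Nat.eq_zero_or_pos N with hN0 | hN0
  · exact ⟨2, mem_Icc.2 ⟨le_rfl, hk⟩, by simp [hN0]⟩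
  have hcount : (#{t : Fin k → V | IsSinkFree D t} : ℝ) ≤
      ∑ ℓ ∈ Icc 2 k, (C ℓ : ℝ) * ((k : ℝ) ^ ℓ * (N : ℝ) ^ (k - ℓ)) := by
    have hnat : #{t : Fin k → V | IsSinkFree D t} ≤
        ∑ ℓ ∈ Icc 2 k, C ℓ * (k.descFactorial ℓ * N ^ (k - ℓ)) :=
      (card_le_card (isSinkFree_subset_biUnion hirr (by omega))).trans <| card_biUnion_le.trans <|
        sum_le_sum fun ℓ _ => by
          simpa using card_filter_containsPattern_le (ι := Fin ℓ) (κ := Fin k) _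
    calc (#{t : Fin k → V | IsSinkFree D t} : ℝ)
        ≤ ∑ ℓ ∈ Icc 2 k, (C ℓ : ℝ) * ((k.descFactorial ℓ : ℝ) * (N : ℝ) ^ (k - ℓ)) := by
          exact_mod_cast hnat
      _ ≤ _ := by gcongr; exact_mod_cast Nat.descFactorial_le_pow k _
  have hsum : ∑ _ℓ ∈ Icc 2 k, (N : ℝ) ^ k / (2 * k) ≤
      ∑ ℓ ∈ Icc 2 k, (C ℓ : ℝ) * ((k : ℝ) ^ ℓ * (N : ℝ) ^ (k - ℓ)) := by
    refine le_trans ?_ ((card_filter_isSinkFree_ge hk hdeg).trans hcount)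
    rw [sum_const, Nat.card_Icc, nsmul_eq_mul, Nat.cast_sub (by omega)]
    field_simp
    push_cast
    nlinarith [pow_pos (Nat.cast_pos.2 hN0 : (0 : ℝ) < N) k]
  obtain ⟨ℓ, hℓ, hle⟩ := exists_le_of_sum_le (nonempty_Icc.2 hk) hsum
  refine ⟨ℓ, hℓ, ?_⟩
  have hℓk := (mem_Icc.1 hℓ).2
  have hNpos : (0 : ℝ) < N := Nat.cast_pos.2 hN0
  rw [div_le_iff₀ (by positivity)]
  rw [div_le_iff₀ (by positivity)] at hle
  refine le_of_mul_le_mul_right ?_ (pow_pos hNpos (k - ℓ))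
  calc (N : ℝ) ^ ℓ * (N : ℝ) ^ (k - ℓ) = (N : ℝ) ^ k := by
        rw [← pow_add, Nat.add_sub_cancel' hℓk]
    _ ≤ (C ℓ : ℝ) * ((k : ℝ) ^ ℓ * (N : ℝ) ^ (k - ℓ)) * (2 * k) := hle
    _ = (C ℓ : ℝ) * (2 * (k : ℝ) ^ (ℓ + 1)) * (N : ℝ) ^ (k - ℓ) := by ring

/-- Cycles of length `ℓ` are counted through their `ℓ` labelled versions (injective maps
`Fin ℓ → V` tracing the cycle), hence the factor `ℓ`. -/
theorem stmt_0 (k n : ℕ) (hk : 2 ≤ k) (D : Fin n → Fin n → Prop)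
    (hirr : ∀ v, ¬ D v v)
    (hdeg : ∀ v : Fin n, (n : ℝ) * Real.log (2 * k) / ((k : ℝ) - 1) ≤ {u | D v u}.ncard) :
    ∃ ℓ : ℕ, 2 ≤ ℓ ∧ ℓ ≤ k ∧
      (n : ℝ) ^ ℓ / (2 * (k : ℝ) ^ (ℓ + 1)) * ℓ ≤
        ({f : Fin ℓ → Fin n | Function.Injective f ∧ ∀ i, D (f i) (f (cyc i))}.ncard : ℝ) := by
  obtain ⟨ℓ, hℓ, hcanon⟩ := exists_card_filter_isDirCycle_isMinRooted_ge hirr hk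
    (by simpa [Set.ncard_eq_toFinset_card'] using hdeg)
  obtain ⟨hℓ2, hℓk⟩ := mem_Icc.1 hℓ
  have : NeZero ℓ := ⟨by omega⟩
  have hrot := mul_card_filter_isMinRooted_le (ℓ := ℓ) (IsDirCycle D) (fun _ hg => hg.1)
    fun _ s hg => hg.comp_add_right s
  have hcycles : {f : Fin ℓ → Fin n | Injective f ∧ ∀ i, D (f i) (f (cyc i))}.ncard =
      #{g : Fin ℓ → Fin n | IsDirCycle D g} := by
    rw [← Set.ncard_coe_finset, coe_filter]
    simp only [mem_univ, true_and]
    rfl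
  refine ⟨ℓ, hℓ2, hℓk, ?_⟩
  rw [hcycles]
  calc (n : ℝ) ^ ℓ / (2 * (k : ℝ) ^ (ℓ + 1)) * ℓ
      ≤ #{g : Fin ℓ → Fin n | IsDirCycle D g ∧ IsMinRooted g} * ℓ := by
        gcongr
        simpa using hcanon
    _ ≤ #{g : Fin ℓ → Fin n | IsDirCycle D g} := by
        rw [mul_comm]
        exact_mod_cast hrot
end

section
/- Let k ≥ 2 and let D be a directed graph on n vertices with minimum out-degree at least n·log(2k)/(k-1). If S is a multiset of k vertices chosen independently and uniformly at random from V(D), then with probability at least 1/2, every vertex of S has an out-neighbour in S; in particular, with probability at least 1/2 the set S contains a directed cycle of length at most k. -/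
open Finset

lemma exists_cycle {n k : ℕ} (hk : 2 ≤ k) (D : Fin n → Fin n → Prop) (hirr : ∀ v, ¬ D v v)
    (f : Fin k → Fin n) (hf : ∀ i, ∃ j, D (f i) (f j)) :
    ∃ ℓ : ℕ, 2 ≤ ℓ ∧ ℓ ≤ k ∧ ∃ g : Fin ℓ → Fin n,
      Function.Injective g ∧ (∀ i, ∃ j, g i = f j) ∧ ∀ i, D (g i) (g (cyc i)) := by
  classical
  choose σ hσ using hf
  have hk0 : 0 < k := by omega
  set i0 : Fin k := ⟨0, hk0⟩ with hi0
  set y : ℕ → Fin n := fun m => f (σ^[m] i0) with hy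
  have hstep : ∀ m, D (y m) (y (m + 1)) := by
    intro m
    have : σ^[m+1] i0 = σ (σ^[m] i0) := Function.iterate_succ_apply' σ m i0
    simp only [hy, this]
    exact hσ _
  -- pigeonhole: two indices in range (k+1) with equal y values
  have hrep : ∃ b, (∃ a < b, y a = y b) ∧ b ≤ k := by
    have hmaps : ∀ m ∈ Finset.range (k+1), y m ∈ Finset.univ.image f := by
      intro m _; exact Finset.mem_image_of_mem f (Finset.mem_univ _)
    have hcard : (Finset.univ.image f).card < (Finset.range (k+1)).card := by
      calc (Finset.univ.image f).card ≤ (Finset.univ : Finset (Fin k)).card :=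
            Finset.card_image_le
        _ < (Finset.range (k+1)).card := by simp
    obtain ⟨a, ha, b, hb, hab, heq⟩ :=
      Finset.exists_ne_map_eq_of_card_lt_of_maps_to hcard hmaps
    rcases lt_or_gt_of_ne hab with h | h
    · exact ⟨b, ⟨a, h, heq⟩, by simpa using Nat.lt_succ_iff.mp (Finset.mem_range.mp hb)⟩
    · exact ⟨a, ⟨b, h, heq.symm⟩, by simpa using Nat.lt_succ_iff.mp (Finset.mem_range.mp ha)⟩
  obtain ⟨b1, hb1, hb1k⟩ := hrep
  have hP : ∃ b, ∃ a < b, y a = y b := ⟨b1, hb1⟩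
  set b := Nat.find hP with hbdef
  obtain ⟨a, hab, hyab⟩ := Nat.find_spec hP
  have hbk : b ≤ k := le_trans (Nat.find_le hb1) hb1k
  -- injectivity of y on [0, b)
  have hinj : ∀ p q, p < q → q < b → y p ≠ y q := by
    intro p q hpq hqb hne
    exact Nat.find_min hP hqb ⟨p, hpq, hne⟩
  set ℓ := b - a with hℓ
  -- ℓ ≥ 2
  have hne : y (b - 1) ≠ y b := by
    intro h
    have hb0 : 1 ≤ b := by omega
    have := hstep (b - 1)
    rw [Nat.sub_add_cancel hb0, h] at this
    exact hirr _ this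
  have hab1 : a < b - 1 := by
    rcases Nat.lt_or_ge a (b-1) with h | h
    · exact h
    · exfalso
      have : a = b - 1 := by omega
      exact hne (this ▸ hyab)
  have hℓ2 : 2 ≤ ℓ := by omega
  have hℓk : ℓ ≤ k := by omega
  refine ⟨ℓ, hℓ2, hℓk, fun i => y (a + i.val), ?_, fun i => ⟨_, rfl⟩, ?_⟩
  · intro i j hij
    by_contra hne'
    have hvij : i.val ≠ j.val := fun h => hne' (Fin.ext h)
    rcases lt_or_gt_of_ne hvij with h | h
    · exact hinj (a + i.val) (a + j.val) (by omega) (by have := j.isLt; omega) hij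
    · exact hinj (a + j.val) (a + i.val) (by omega) (by have := i.isLt; omega) hij.symm
  · intro i
    have hcycval : y (a + ((i.val + 1) % ℓ)) = y (a + i.val + 1) := by
      rcases Nat.lt_or_ge (i.val + 1) ℓ with h | h
      · rw [Nat.mod_eq_of_lt h]; ring_nf
      · have hi : i.val + 1 = ℓ := by have := i.isLt; omega
        rw [hi, Nat.mod_self]
        have : a + i.val + 1 = b := by omega
        rw [this, Nat.add_zero, hyab]
    show D (y (a + i.val)) (y (a + ((i.val + 1) % ℓ)))
    rw [hcycval]
    exact hstep _


lemma count_main (k n : ℕ) (hk : 2 ≤ k) (D : Fin n → Fin n → Prop)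
    (hirr : ∀ v, ¬ D v v)
    (hdeg : ∀ v : Fin n, (n : ℝ) * Real.log (2 * k) / ((k : ℝ) - 1) ≤ {u | D v u}.ncard) :
    (1 / 2 : ℝ) * (n : ℝ) ^ k ≤
      ({f : Fin k → Fin n | ∀ i, ∃ j, D (f i) (f j)}.ncard : ℝ) := by
  classical
  set d : Fin n → ℕ := fun v => (univ.filter (D v)).card with hd
  have hdval : ∀ v, ({u | D v u}.ncard : ℝ) = d v := by
    intro v
    have : {u | D v u} = ↑(univ.filter (D v)) := by ext u; simp
    rw [this, Set.ncard_coe_finset]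
  set good : Finset (Fin k → Fin n) := univ.filter (fun f => ∀ i, ∃ j, D (f i) (f j)) with hgood
  set bad : Finset (Fin k → Fin n) := univ.filter (fun f => ¬ ∀ i, ∃ j, D (f i) (f j)) with hbad
  have hsum : good.card + bad.card = n ^ k := by
    rw [hgood, hbad, Finset.card_filter_add_card_filter_not]
    simp [Fintype.card_fun]
  -- bad is covered by union over i of B i
  set B : Fin k → Finset (Fin k → Fin n) :=
    fun i => univ.filter (fun f => ∀ j, ¬ D (f i) (f j)) with hB
  have hbadsub : bad ⊆ univ.biUnion B := by
    intro f hf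
    simp only [hbad, mem_filter, mem_univ, true_and] at hf
    push_neg at hf
    obtain ⟨i, hi⟩ := hf
    exact mem_biUnion.mpr ⟨i, mem_univ _, by simp [hB, hi]⟩
  have hBcard : ∀ i, (B i).card ≤ ∑ v : Fin n, (n - d v) ^ (k - 1) := by
    intro i
    have hsub : B i ⊆ univ.biUnion (fun v : Fin n =>
        Fintype.piFinset (fun j : Fin k => if j = i then {v} else univ.filter (fun u => ¬ D v u))) := by
      intro f hf
      simp only [hB, mem_filter, mem_univ, true_and] at hf
      refine mem_biUnion.mpr ⟨f i, mem_univ _, ?_⟩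
      rw [Fintype.mem_piFinset]
      intro j
      by_cases hji : j = i
      · simp [hji]
      · simp [hji, hf j]
    calc (B i).card ≤ _ := Finset.card_le_card hsub
      _ ≤ ∑ v : Fin n, (Fintype.piFinset (fun j : Fin k =>
            if j = i then ({v} : Finset (Fin n)) else univ.filter (fun u => ¬ D v u))).card :=
          Finset.card_biUnion_le
      _ ≤ ∑ v : Fin n, (n - d v) ^ (k - 1) := by
          apply Finset.sum_le_sum
          intro v _
          rw [Fintype.card_piFinset]
          have hcompl : (univ.filter (fun u => ¬ D v u)).card = n - d v := by
            have : univ.filter (fun u => ¬ D v u) = (univ.filter (D v))ᶜ := by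
              ext u; simp
            rw [this, Finset.card_compl]
            simp [hd]
          have hc2 : ∀ j : Fin k, (if j = i then ({v} : Finset (Fin n)) else univ.filter (fun u => ¬ D v u)).card = if j = i then 1 else n - d v := by
            intro j
            by_cases hji : j = i
            · simp [hji]
            · simp only [if_neg hji]; exact hcompl
          rw [Finset.prod_congr rfl (fun j _ => hc2 j),
              ← Finset.mul_prod_erase univ _ (mem_univ i), if_pos rfl, one_mul,
              Finset.prod_congr rfl (fun j hj => if_neg (Finset.mem_erase.mp hj).1),
              Finset.prod_const, Finset.card_erase_of_mem (mem_univ i)]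
          have hcu : #(univ : Finset (Fin k)) - 1 = k - 1 := by simp
          rw [hcu]
  -- real bound on each term
  have hterm : ∀ v : Fin n, ((n - d v : ℕ) : ℝ) ^ (k - 1) ≤ (n : ℝ) ^ (k - 1) / (2 * k) := by
    intro v
    have hk0 : (0:ℝ) < 2 * k := by positivity
    have hk1 : (0:ℝ) < (k:ℝ) - 1 := by
      have : (2:ℝ) ≤ k := by exact_mod_cast hk
      linarith
    have hdn : d v ≤ n := by
      calc d v ≤ (univ : Finset (Fin n)).card := Finset.card_filter_le _ _
        _ = n := by simp
    have hcast : ((n - d v : ℕ) : ℝ) = (n : ℝ) - d v := by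
      rw [Nat.cast_sub hdn]
    have hdeg' : (n : ℝ) * Real.log (2 * k) / ((k : ℝ) - 1) ≤ d v := by
      rw [← hdval v]; exact hdeg v
    set L : ℝ := Real.log (2 * k) / ((k:ℝ) - 1) with hL
    have hstep1 : ((n - d v : ℕ) : ℝ) ≤ (n : ℝ) * (1 - L) := by
      rw [hcast, hL]
      have : (n:ℝ) * Real.log (2*k) / ((k:ℝ)-1) = (n:ℝ) * (Real.log (2*k) / ((k:ℝ)-1)) := by ring
      rw [this] at hdeg'
      nlinarith
    have hstep2 : (n : ℝ) * (1 - L) ≤ (n : ℝ) * Real.exp (-L) := by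
      have := Real.add_one_le_exp (-L)
      nlinarith [Nat.cast_nonneg (α := ℝ) n]
    have hnonneg : (0:ℝ) ≤ ((n - d v : ℕ) : ℝ) := Nat.cast_nonneg _
    have hpow : ((n - d v : ℕ) : ℝ) ^ (k-1) ≤ ((n : ℝ) * Real.exp (-L)) ^ (k-1) :=
      pow_le_pow_left₀ hnonneg (le_trans hstep1 hstep2) _
    refine le_trans hpow ?_
    have hexp : Real.exp ((k - 1 : ℕ) * (-L)) = 1 / (2 * k) := by
      have hk1' : ((k - 1 : ℕ) : ℝ) = (k : ℝ) - 1 := by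
        rw [Nat.cast_sub (by omega)]; simp
      rw [hk1', hL]
      have : ((k:ℝ) - 1) * -(Real.log (2*k) / ((k:ℝ)-1)) = - Real.log (2*k) := by
        field_simp
      rw [this, Real.exp_neg, Real.exp_log hk0]
      ring
    calc ((n:ℝ) * Real.exp (-L)) ^ (k-1) = (n:ℝ)^(k-1) * (1/(2*(k:ℝ))) := by
          rw [mul_pow, ← Real.exp_nat_mul, hexp]
      _ = (n:ℝ)^(k-1)/(2*(k:ℝ)) := by ring
      _ ≤ (n:ℝ)^(k-1)/(2*(k:ℝ)) := le_refl _
  -- combine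
  have hbadR : (bad.card : ℝ) ≤ (1/2 : ℝ) * (n:ℝ)^k := by
    have h1 : (bad.card : ℝ) ≤ ∑ i : Fin k, ((B i).card : ℝ) := by
      have := Finset.card_le_card hbadsub
      have h2 := Finset.card_biUnion_le (s := (univ : Finset (Fin k))) (t := B)
      exact_mod_cast le_trans this h2
    have h3 : ∑ i : Fin k, ((B i).card : ℝ) ≤ ∑ i : Fin k, ∑ v : Fin n, ((n : ℝ) ^ (k-1) / (2*k)) := by
      apply Finset.sum_le_sum
      intro i _
      calc ((B i).card : ℝ) ≤ ((∑ v : Fin n, (n - d v) ^ (k - 1) : ℕ) : ℝ) := by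
            exact_mod_cast hBcard i
        _ = ∑ v : Fin n, ((n - d v : ℕ) : ℝ) ^ (k-1) := by push_cast; ring_nf
        _ ≤ ∑ v : Fin n, ((n : ℝ) ^ (k-1) / (2*k)) := Finset.sum_le_sum (fun v _ => hterm v)
    have h4 : ∑ i : Fin k, ∑ v : Fin n, ((n : ℝ) ^ (k-1) / (2*k)) = (1/2:ℝ) * (n:ℝ)^k := by
      simp only [Finset.sum_const, Finset.card_univ, Fintype.card_fin, nsmul_eq_mul]
      have hk0 : (0:ℝ) < 2 * k := by positivity
      have hpow : (n:ℝ) * (n:ℝ)^(k-1) = (n:ℝ)^k := by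
        rw [← pow_succ']
        congr 1
        omega
      field_simp
      ring_nf
      nlinarith [hpow]
    linarith [le_trans h1 h3, h4.le]
  have hncard : ({f : Fin k → Fin n | ∀ i, ∃ j, D (f i) (f j)}.ncard : ℝ) = good.card := by
    have : {f : Fin k → Fin n | ∀ i, ∃ j, D (f i) (f j)} = ↑good := by
      ext f; simp [hgood]
    rw [this, Set.ncard_coe_finset]
  rw [hncard]
  have : (good.card : ℝ) + bad.card = (n:ℝ)^k := by exact_mod_cast hsum
  linarith

/-- If `D` is a digraph on `n` vertices with minimum out-degree at least
`n·log(2k)/(k-1)` and `S = (v_1, …, v_k)` is a uniformly random `k`-tuple of vertices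
(chosen with repetition), then with probability at least `1/2` every vertex of `S`
has an out-neighbour in `S`; in particular with probability at least `1/2` the set
`S` contains a directed cycle of length at most `k`.  Probabilities are expressed by
counting tuples: an event has probability at least `1/2` iff at least `n^k/2` of the
`n^k` tuples realize it. -/
theorem stmt_1 (k n : ℕ) (hk : 2 ≤ k) (D : Fin n → Fin n → Prop)
    (hirr : ∀ v, ¬ D v v)
    (hdeg : ∀ v : Fin n, (n : ℝ) * Real.log (2 * k) / ((k : ℝ) - 1) ≤ {u | D v u}.ncard) :
    (1 / 2 : ℝ) * (n : ℝ) ^ k ≤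
      ({f : Fin k → Fin n | ∀ i, ∃ j, D (f i) (f j)}.ncard : ℝ) ∧
    (1 / 2 : ℝ) * (n : ℝ) ^ k ≤
      ({f : Fin k → Fin n | ∃ ℓ : ℕ, 2 ≤ ℓ ∧ ℓ ≤ k ∧ ∃ g : Fin ℓ → Fin n,
          Function.Injective g ∧ (∀ i, ∃ j, g i = f j) ∧
          ∀ i, D (g i) (g (cyc i))}.ncard : ℝ) := by
  have h1 := count_main k n hk D hirr hdeg
  refine ⟨h1, le_trans h1 ?_⟩
  have hsub : {f : Fin k → Fin n | ∀ i, ∃ j, D (f i) (f j)} ⊆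
      {f : Fin k → Fin n | ∃ ℓ : ℕ, 2 ≤ ℓ ∧ ℓ ≤ k ∧ ∃ g : Fin ℓ → Fin n,
          Function.Injective g ∧ (∀ i, ∃ j, g i = f j) ∧
          ∀ i, D (g i) (g (cyc i))} := fun f hf => exists_cycle hk D hirr f hf
  exact_mod_cast Nat.cast_le.mpr (Set.ncard_le_ncard hsub (Set.toFinite _))
end

section
/- Let G be a Hamiltonian graph with Hamilton cycle H and auxiliary graph A = A(G, H). If S ⊆ A is a union of vertex-disjoint colour-alternating cycles containing no two neighbouring vertices, then the subgraph F(S) ⊆ G is a 2-factor of G. -/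
/-- Red part of the auxiliary graph `A(G,H)` (vertices indexed by `ZMod n`, vertex
`i` standing for the Hamilton-cycle edge `e_i = v_i v_{i+1}`): a red edge `e_i e_j`
iff `v_{i+1} v_{j+1}` is an inner edge of `G`. -/
def auxRed (n : ℕ) (G : SimpleGraph (ZMod n)) : SimpleGraph (ZMod n) where
  Adj i j := G.Adj (i + 1) (j + 1) ∧ j ≠ i + 1 ∧ i ≠ j + 1
  symm := ⟨fun i j h => ⟨h.1.symm, h.2.2, h.2.1⟩⟩
  loopless := ⟨fun i h => G.irrefl h.1⟩

/-- Blue part of `A(G,H)`: a blue edge `e_i e_j` iff `v_i v_j` is an inner edge. -/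
def auxBlue (n : ℕ) (G : SimpleGraph (ZMod n)) : SimpleGraph (ZMod n) where
  Adj i j := G.Adj i j ∧ j ≠ i + 1 ∧ i ≠ j + 1
  symm := ⟨fun i j h => ⟨h.1.symm, h.2.2, h.2.1⟩⟩
  loopless := ⟨fun i h => G.irrefl h.1⟩

/-- Given a union `S` of vertex-disjoint colour-alternating cycles in `A(G,H)`,
recorded by its vertex set `T` and by the red/blue partner functions `r`, `b`
(each vertex of `S` lies on exactly one red and one blue edge of `S`), the
corresponding spanning subgraph `F(S)` of `G`: its edges are the Hamilton-cycle
edges `v_x v_{x+1}` with `e_x ∉ V(S)`, the inner edges `v_{i+1} v_{r(i)+1}` coming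
from red edges of `S`, and the inner edges `v_i v_{b(i)}` coming from blue edges of
`S`. -/
def FSgraph (n : ℕ) (T : Finset (ZMod n)) (r b : ZMod n → ZMod n) :
    SimpleGraph (ZMod n) :=
  SimpleGraph.fromRel (fun x y =>
    (y = x + 1 ∧ x ∉ T) ∨ (x - 1 ∈ T ∧ y = r (x - 1) + 1) ∨ (x ∈ T ∧ y = b x))

/-!
Every vertex `v_x` meets the Hamilton cycle in the two edges `e_x` and `e_{x-1}`.
In `F(S)` the edge `e_x` survives unless `e_x ∈ V(S)`, in which case it is replaced by
the blue edge `v_x v_{b x}`; likewise `e_{x-1}` is either kept or replaced by the red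
edge `v_x v_{r(x-1)+1}`. Since `r` and `b` are involutions on `V(S)`, these are the only
edges of `F(S)` at `v_x`, so `v_x` has the two neighbours `next x` and `prev x`.
They are distinct: `e_x` and `e_{x-1}` are neighbouring in `A`, so at most one of them
is replaced; if one is, the two neighbours differ because an edge of `A` never joins
`e_i` to a neighbouring `e_j`, and if neither is, because `x + 1 ≠ x - 1` for `n ≥ 3`.
-/

theorem ZMod.natCast_ne_zero_of_lt {n k : ℕ} (hk0 : 0 < k) (hk : k < n) :
    (k : ZMod n) ≠ 0 := by
  rw [Ne, ZMod.natCast_eq_zero_iff]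
  exact Nat.not_dvd_of_pos_of_lt hk0 hk

namespace FSgraph

variable {n : ℕ} {T : Finset (ZMod n)} {r b : ZMod n → ZMod n}

theorem adj_iff {x y : ZMod n} :
    (FSgraph n T r b).Adj x y ↔ x ≠ y ∧
      (((y = x + 1 ∧ x ∉ T) ∨ (x - 1 ∈ T ∧ y = r (x - 1) + 1) ∨ (x ∈ T ∧ y = b x)) ∨
       ((x = y + 1 ∧ y ∉ T) ∨ (y - 1 ∈ T ∧ x = r (y - 1) + 1) ∨ (y ∈ T ∧ x = b y))) :=
  SimpleGraph.fromRel_adj _ _ _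

theorem le {G : SimpleGraph (ZMod n)} (hH : ∀ i, G.Adj i (i + 1))
    (hr : ∀ i ∈ T, (auxRed n G).Adj i (r i)) (hb : ∀ i ∈ T, (auxBlue n G).Adj i (b i)) :
    FSgraph n T r b ≤ G := by
  have hrel : ∀ x y, ((y = x + 1 ∧ x ∉ T) ∨ (x - 1 ∈ T ∧ y = r (x - 1) + 1) ∨
      (x ∈ T ∧ y = b x)) → G.Adj x y := by
    rintro x y (⟨rfl, -⟩ | ⟨hx, rfl⟩ | ⟨hx, rfl⟩)
    · exact hH x
    · simpa only [sub_add_cancel] using (hr _ hx).1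
    · exact (hb _ hx).1
  intro x y hxy
  rcases (adj_iff.mp hxy).2 with h | h
  · exact hrel x y h
  · exact (hrel y x h).symm

variable (T b) in
def next (x : ZMod n) : ZMod n := if x ∈ T then b x else x + 1

variable (T r) in
def prev (x : ZMod n) : ZMod n := if x - 1 ∈ T then r (x - 1) + 1 else x - 1

theorem self_ne_next {G : SimpleGraph (ZMod n)} (h1 : (1 : ZMod n) ≠ 0)
    (hb : ∀ i ∈ T, (auxBlue n G).Adj i (b i)) (x : ZMod n) : x ≠ next T b x := by
  unfold next
  split_ifs with hx
  · exact (hb x hx).ne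
  · exact fun h => h1 (add_eq_left.mp h.symm)

theorem self_ne_prev {G : SimpleGraph (ZMod n)} (h1 : (1 : ZMod n) ≠ 0)
    (hr : ∀ i ∈ T, (auxRed n G).Adj i (r i)) (x : ZMod n) : x ≠ prev T r x := by
  unfold prev
  split_ifs with hx
  · exact fun h => (hr _ hx).ne (sub_eq_iff_eq_add.mpr h)
  · exact fun h => h1 (sub_eq_self.mp h.symm)

theorem next_ne_prev {G : SimpleGraph (ZMod n)} (h2 : (2 : ZMod n) ≠ 0)
    (hr : ∀ i ∈ T, (auxRed n G).Adj i (r i)) (hb : ∀ i ∈ T, (auxBlue n G).Adj i (b i))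
    (hnb : ∀ i ∈ T, i + 1 ∉ T) (x : ZMod n) : next T b x ≠ prev T r x := by
  unfold next prev
  split_ifs with hx hx' hx'
  · exact absurd hx (by simpa using hnb _ hx')
  · intro h
    exact (hb x hx).2.2 (by rw [h, sub_add_cancel])
  · intro h
    exact (hr _ hx').2.1 (by rw [sub_add_cancel, ← add_right_cancel h])
  · intro h
    exact h2 (by linear_combination h)

theorem neighborSet_eq (hr : ∀ i ∈ T, r i ∈ T ∧ r (r i) = i)
    (hb : ∀ i ∈ T, b i ∈ T ∧ b (b i) = i) (hnext : ∀ x, x ≠ next T b x)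
    (hprev : ∀ x, x ≠ prev T r x) (x : ZMod n) :
    (FSgraph n T r b).neighborSet x = {next T b x, prev T r x} := by
  ext y
  simp only [SimpleGraph.mem_neighborSet, Set.mem_insert_iff, Set.mem_singleton_iff]
  constructor
  · intro hxy
    rcases (adj_iff.mp hxy).2 with
      (⟨rfl, hx⟩ | ⟨hx, rfl⟩ | ⟨hx, rfl⟩) | (⟨rfl, hy⟩ | ⟨hy, rfl⟩ | ⟨hy, rfl⟩)
    · exact Or.inl (if_neg hx).symm
    · exact Or.inr (if_pos hx).symm
    · exact Or.inl (if_pos hx).symm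
    · exact Or.inr (by simp [prev, hy])
    · exact Or.inr (by simp [prev, (hr _ hy).1, (hr _ hy).2])
    · exact Or.inl (by simp [next, (hb _ hy).1, (hb _ hy).2])
  · rintro (rfl | rfl)
    · refine adj_iff.mpr ⟨hnext x, Or.inl ?_⟩
      unfold next
      split_ifs with hx
      exacts [Or.inr (Or.inr ⟨hx, rfl⟩), Or.inl ⟨rfl, hx⟩]
    · refine adj_iff.mpr ⟨hprev x, ?_⟩
      unfold prev
      split_ifs with hx
      exacts [Or.inl (Or.inr (Or.inl ⟨hx, rfl⟩)), Or.inr (Or.inl ⟨by simp, hx⟩)]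

end FSgraph

theorem stmt_7_general (n : ℕ) (hn : 3 ≤ n) (G : SimpleGraph (ZMod n))
    (hH : ∀ i : ZMod n, G.Adj i (i + 1))
    (T : Finset (ZMod n)) (r b : ZMod n → ZMod n)
    (hr : ∀ i ∈ T, r i ∈ T ∧ r (r i) = i ∧ (auxRed n G).Adj i (r i))
    (hb : ∀ i ∈ T, b i ∈ T ∧ b (b i) = i ∧ (auxBlue n G).Adj i (b i))
    (hnb : ∀ i ∈ T, i + 1 ∉ T) :
    (∀ x y, (FSgraph n T r b).Adj x y → G.Adj x y) ∧
    (∀ x : ZMod n, {y | (FSgraph n T r b).Adj x y}.ncard = 2) := by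
  have h1 : (1 : ZMod n) ≠ 0 := by exact_mod_cast ZMod.natCast_ne_zero_of_lt one_pos (by omega)
  have h2 : (2 : ZMod n) ≠ 0 := by exact_mod_cast ZMod.natCast_ne_zero_of_lt two_pos (by omega)
  have hred : ∀ i ∈ T, (auxRed n G).Adj i (r i) := fun i hi => (hr i hi).2.2
  have hblue : ∀ i ∈ T, (auxBlue n G).Adj i (b i) := fun i hi => (hb i hi).2.2
  refine ⟨fun _ _ h => FSgraph.le hH hred hblue h, fun x => ?_⟩
  change ((FSgraph n T r b).neighborSet x).ncard = 2
  rw [FSgraph.neighborSet_eq (fun i hi => ⟨(hr i hi).1, (hr i hi).2.1⟩)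
      (fun i hi => ⟨(hb i hi).1, (hb i hi).2.1⟩)
      (FSgraph.self_ne_next h1 hblue) (FSgraph.self_ne_prev h1 hred) x,
    Set.ncard_pair (FSgraph.next_ne_prev h2 hred hblue hnb x)]

/-- If `S ⊆ A(G,H)` is a union of vertex-disjoint colour-alternating cycles with no
two neighbouring vertices, then `F(S)` is a 2-factor of `G`: a spanning subgraph of
`G` in which every vertex has degree exactly `2`. -/
theorem stmt_7 (n : ℕ) [NeZero n] (hn : 3 ≤ n) (G : SimpleGraph (ZMod n))
    (hH : ∀ i : ZMod n, G.Adj i (i + 1))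
    (T : Finset (ZMod n)) (r b : ZMod n → ZMod n)
    (hr : ∀ i ∈ T, r i ∈ T ∧ r (r i) = i ∧ (auxRed n G).Adj i (r i))
    (hb : ∀ i ∈ T, b i ∈ T ∧ b (b i) = i ∧ (auxBlue n G).Adj i (b i))
    (hnb : ∀ i ∈ T, i + 1 ∉ T) :
    (∀ x y, (FSgraph n T r b).Adj x y → G.Adj x y) ∧
    (∀ x : ZMod n, {y | (FSgraph n T r b).Adj x y}.ncard = 2) :=
  stmt_7_general n hn G hH T r b hr hb hnb
end
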